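/- arXiv:1912.00884 — 3 statements merged into one kernel-verified Lean document; each statement's English description precedes it below -/
import Mathlib

section
/- The shifted soliton components satisfy the δ-vertex condition: if φ̃ⱼ is as in the star-graph profile (first k edges shifted by −c, remaining N−k edges shifted by +c), then all φ̃ⱼ(0) are equal and ∑ⱼ φ̃ⱼ'(0) = α·φ̃₁(0). -/
open Real

/-- Inverse hyperbolic tangent. -/
noncomputable def artanh' (t : ℝ) : ℝ := Real.log ((1 + t) / (1 - t)) / 2

lemma tanh_artanh {t : ℝ} (h : |t| < 1) : Real.tanh (artanh' t) = t := by
  obtain ⟨h1, h2⟩ := abs_lt.1 h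
  have hm : 0 < 1 - t := by linarith
  have hp : 0 < 1 + t := by linarith
  have hr : 0 < (1 + t) / (1 - t) := div_pos hp hm
  rw [artanh', Real.tanh_eq_sinh_div_cosh, Real.sinh_eq, Real.cosh_eq]
  set u := Real.exp (Real.log ((1 + t) / (1 - t)) / 2) with hu
  have hupos : 0 < u := Real.exp_pos _
  have hu2 : u * u = (1 + t) / (1 - t) := by
    rw [hu, ← Real.exp_add]
    have : Real.log ((1 + t) / (1 - t)) / 2 + Real.log ((1 + t) / (1 - t)) / 2
        = Real.log ((1 + t) / (1 - t)) := by ring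
    rw [this, Real.exp_log hr]
  have hneg : Real.exp (-(Real.log ((1 + t) / (1 - t)) / 2)) = u⁻¹ := by
    rw [Real.exp_neg]
  rw [hneg]
  have huu : u * u * (1 - t) = 1 + t := by
    rw [hu2]; field_simp
  field_simp
  nlinarith [huu, hupos]

lemma deriv_soliton (A b q d : ℝ) (hA : 0 < A) :
    deriv (fun x : ℝ => (A * (1 / Real.cosh (b * x + d)) ^ 2) ^ q) 0
      = -(2 * q * b * Real.tanh d) * (A * (1 / Real.cosh d) ^ 2) ^ q := by
  have hcd : Real.cosh d ≠ 0 := (Real.cosh_pos d).ne'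
  have h1 : HasDerivAt (fun x : ℝ => b * x + d) b 0 := by
    simpa using ((hasDerivAt_id (0:ℝ)).const_mul b).add_const d
  have h2 : HasDerivAt (fun x : ℝ => Real.cosh (b * x + d)) (Real.sinh d * b) 0 := by
    have := (Real.hasDerivAt_cosh (b * 0 + d)).comp 0 h1
    simp only [mul_zero, zero_add] at this
    exact this
  have h3 : HasDerivAt (fun x : ℝ => (Real.cosh (b * x + d))⁻¹)
      (-(Real.sinh d * b) / (Real.cosh d) ^ 2) 0 := by
    have := h2.inv (by simpa using hcd)
    simp only [mul_zero, zero_add] at this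
    exact this
  have h4 : HasDerivAt (fun x : ℝ => A * (1 / Real.cosh (b * x + d)) ^ 2)
      (A * (2 * (Real.cosh d)⁻¹ ^ 1 * (-(Real.sinh d * b) / (Real.cosh d) ^ 2))) 0 := by
    have := (h3.pow 2).const_mul A
    simp only [one_div]
    exact this.congr_deriv (by norm_num)
  have hF0 : 0 < A * (1 / Real.cosh d) ^ 2 := by positivity
  have hne : (fun x : ℝ => A * (1 / Real.cosh (b * x + d)) ^ 2) 0 ≠ 0 ∨ 1 ≤ q := by
    left; simpa using hF0.ne'
  have h5 := h4.rpow_const (p := q) hne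
  have hd := h5.deriv
  simp only [mul_zero, zero_add] at hd
  rw [hd]
  rw [Real.rpow_sub_one hF0.ne', Real.tanh_eq_sinh_div_cosh]
  field_simp

lemma sum_ite_fin (N k : ℕ) (hkN : k ≤ N) (a b : ℝ) :
    ∑ j : Fin N, (if (j : ℕ) < k then a else b) = k * a + (N - k : ℕ) * b := by
  rw [Fin.sum_univ_eq_sum_range (fun i => if i < k then a else b), Finset.range_eq_Ico,
    ← Finset.sum_Ico_consecutive _ (Nat.zero_le k) hkN]
  rw [Finset.sum_congr rfl (fun i hi => if_pos (Finset.mem_Ico.1 hi).2),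
    Finset.sum_congr rfl (fun i hi => if_neg (by simpa using Nat.not_lt.2 (Finset.mem_Ico.1 hi).1))]
  simp [Nat.card_Ico, mul_comm]

/-- The shifted soliton star-graph profile satisfies the δ-vertex conditions:
continuity at the vertex and `∑ⱼ φ̃ⱼ'(0) = α φ̃₁(0)`. -/
theorem delta_vertex_condition (N k : ℕ) (α p m ω : ℝ)
    (hN : 2 ≤ N) (hk : (k : ℝ) ≤ ((N : ℝ) - 1) / 2) (hα : α ≠ 0) (hp : 1 < p)
    (hmω : m ^ 2 - ω ^ 2 > α ^ 2 / ((N : ℝ) - 2 * k) ^ 2)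
    (c : ℝ) (hc : c = artanh' (α / ((2 * (k : ℝ) - N) * Real.sqrt (m ^ 2 - ω ^ 2))))
    (φ : Fin N → ℝ → ℝ)
    (hφ : ∀ j : Fin N, φ j = fun x =>
      ((p + 1) * (m ^ 2 - ω ^ 2) / 2 *
        (1 / Real.cosh ((p - 1) * Real.sqrt (m ^ 2 - ω ^ 2) / 2 * x
            + (if (j : ℕ) < k then -c else c))) ^ 2) ^ (1 / (p - 1))) :
    (∀ i j : Fin N, φ i 0 = φ j 0) ∧
    (∑ j : Fin N, deriv (φ j) 0 = α * φ ⟨0, by omega⟩ 0) := by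
  -- basic facts
  have h2k : 2 * k + 1 ≤ N := by
    have : 2 * (k : ℝ) + 1 ≤ (N : ℝ) := by linarith [hk]
    exact_mod_cast this
  have hkN : k ≤ N := by omega
  have hNk : ((N : ℝ) - 2 * k) ≠ 0 := by
    have : (2 * k + 1 : ℝ) ≤ (N : ℝ) := by exact_mod_cast h2k
    intro h; linarith
  have hms : 0 < m ^ 2 - ω ^ 2 := by
    have : 0 < α ^ 2 / ((N : ℝ) - 2 * k) ^ 2 := by positivity
    linarith
  set s := Real.sqrt (m ^ 2 - ω ^ 2) with hs
  have hspos : 0 < s := Real.sqrt_pos.2 hms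
  have hs2 : s ^ 2 = m ^ 2 - ω ^ 2 := Real.sq_sqrt hms.le
  set A := (p + 1) * (m ^ 2 - ω ^ 2) / 2 with hA
  have hApos : 0 < A := by positivity
  set b := (p - 1) * s / 2 with hb
  set q := 1 / (p - 1) with hq
  have hp1 : p - 1 ≠ 0 := by intro h; nlinarith
  -- tanh c
  set t := α / ((2 * (k : ℝ) - N) * s) with ht
  have htlt : |t| < 1 := by
    rw [← Real.sqrt_one]
    rw [show |t| = Real.sqrt (t ^ 2) from (Real.sqrt_sq_eq_abs t).symm]
    apply Real.sqrt_lt_sqrt (by positivity)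
    rw [ht, div_pow, mul_pow]
    have h1 : (2 * (k : ℝ) - N) ^ 2 = ((N : ℝ) - 2 * k) ^ 2 := by ring
    rw [h1, hs2]
    rw [div_lt_one (by positivity)]
    have := (div_lt_iff₀ (by positivity : (0:ℝ) < ((N : ℝ) - 2 * k) ^ 2)).1 hmω
    nlinarith [this]
  have htanh : Real.tanh c = t := by rw [hc]; exact tanh_artanh (t := t) htlt
  -- value at 0
  have hval : ∀ j : Fin N, φ j 0 = (A * (1 / Real.cosh c) ^ 2) ^ q := by
    intro j
    rw [hφ j]
    by_cases hj : (j : ℕ) < k <;> simp [hj, Real.cosh_neg]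
  refine ⟨fun i j => by rw [hval i, hval j], ?_⟩
  -- derivatives
  set V := (A * (1 / Real.cosh c) ^ 2) ^ q with hV
  have hderiv : ∀ j : Fin N, deriv (φ j) 0 =
      (if (j : ℕ) < k then (2 * q * b * Real.tanh c) * V else -(2 * q * b * Real.tanh c) * V) := by
    intro j
    rw [hφ j]
    by_cases hj : (j : ℕ) < k <;> simp only [hj, if_true, if_false, reduceIte]
    · have := deriv_soliton A b q (-c) hApos
      rw [this, Real.tanh_neg, Real.cosh_neg, hV]; ring
    · exact deriv_soliton A b q c hApos
  have hsum : ∑ j : Fin N, deriv (φ j) 0 =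
      (k : ℝ) * ((2 * q * b * Real.tanh c) * V) + ((N - k : ℕ) : ℝ) * (-(2 * q * b * Real.tanh c) * V) := by
    rw [Finset.sum_congr rfl (fun j _ => hderiv j)]
    exact sum_ite_fin N k hkN _ _
  rw [hsum, hval ⟨0, by omega⟩]
  have h2qb : 2 * q * b = s := by
    rw [hq, hb]; field_simp
  rw [h2qb, htanh, ht]
  have hcast : ((N - k : ℕ) : ℝ) = (N : ℝ) - k := by
    push_cast [Nat.cast_sub hkN]; ring
  rw [hcast]
  have hden : (2 * (k : ℝ) - N) * s ≠ 0 := by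
    apply mul_ne_zero _ hspos.ne'
    intro h; apply hNk; linarith
  field_simp
  have hkN' : ((k : ℝ) * 2 - N) ≠ 0 := by intro h; apply hNk; linarith
  rw [div_eq_iff hkN']
  ring
end

section
/- Quadratic form lower bound for the δ-vertex: for u₁,…,u_N ∈ H¹(0,∞) with u₁(0) = … = u_N(0) and α < 0, ∑ⱼ‖uⱼ'‖²_{L²} + α|u₁(0)|² ≥ −(α²/N²)·∑ⱼ‖uⱼ‖²_{L²}. -/
open MeasureTheory Set Filter

/-!
On a single edge, `‖u‖²` and its derivative `2 ⟪u, u'⟫` are integrable on `(a, ∞)`, so `‖u‖²`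
vanishes at infinity and `‖u a‖² = -∫ 2 ⟪u, u'⟫`; bounding the integrand by AM-GM gives the trace
inequality `‖u a‖² ≤ ε ‖u'‖₂² + ε⁻¹ ‖u‖₂²`. Summing it over the `N` edges, which share the vertex
value, and choosing `ε = N / |α|` gives the bound.
-/

section TraceInequality

variable {E : Type*} [NormedAddCommGroup E] [InnerProductSpace ℝ E]

lemma abs_two_mul_real_inner_le {ε : ℝ} (hε : 0 < ε) (x y : E) :
    |2 * inner ℝ x y| ≤ ε * ‖y‖ ^ 2 + ε⁻¹ * ‖x‖ ^ 2 := by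
  have hinner : |inner ℝ x y| ≤ ‖x‖ * ‖y‖ := abs_real_inner_le_norm x y
  have hamgm : 2 * (‖x‖ * ‖y‖) ≤ ε * ‖y‖ ^ 2 + ε⁻¹ * ‖x‖ ^ 2 := by
    have hsq : 0 ≤ ε⁻¹ * (ε * ‖y‖ - ‖x‖) ^ 2 := by positivity
    have hid : 2 * (‖x‖ * ‖y‖) = ε * ‖y‖ ^ 2 + ε⁻¹ * ‖x‖ ^ 2 - ε⁻¹ * (ε * ‖y‖ - ‖x‖) ^ 2 := by
      field_simp; ring
    linarith
  rw [abs_mul, abs_two]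
  linarith

variable {u u' : ℝ → E} {a : ℝ}

lemma norm_sq_le_integral_of_memLp_two (hcont : ContinuousWithinAt u (Ici a) a)
    (hderiv : ∀ x ∈ Ioi a, HasDerivAt u (u' x) x)
    (hu : MemLp u 2 (volume.restrict (Ioi a))) (hu' : MemLp u' 2 (volume.restrict (Ioi a)))
    {ε : ℝ} (hε : 0 < ε) :
    ‖u a‖ ^ 2 ≤ ε * (∫ x in Ioi a, ‖u' x‖ ^ 2) + ε⁻¹ * ∫ x in Ioi a, ‖u x‖ ^ 2 := by
  have hsq : IntegrableOn (fun x ↦ ‖u x‖ ^ 2) (Ioi a) := hu.norm.integrable_sq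
  have hsq' : IntegrableOn (fun x ↦ ‖u' x‖ ^ 2) (Ioi a) := hu'.norm.integrable_sq
  have hdom : IntegrableOn (fun x ↦ ε * ‖u' x‖ ^ 2 + ε⁻¹ * ‖u x‖ ^ 2) (Ioi a) :=
    (hsq'.const_mul ε).add (hsq.const_mul ε⁻¹)
  have hderiv_int : IntegrableOn (fun x ↦ 2 * inner ℝ (u x) (u' x)) (Ioi a) :=
    hdom.mono' ((hu.1.inner hu'.1).const_mul 2)
      (Eventually.of_forall fun x ↦ abs_two_mul_real_inner_le hε (u x) (u' x))
  have hftc : ∫ x in Ioi a, 2 * inner ℝ (u x) (u' x) = 0 - ‖u a‖ ^ 2 :=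
    integral_Ioi_of_hasDerivAt_of_tendsto (hcont.norm.pow 2)
      (fun x hx ↦ (hderiv x hx).norm_sq) hderiv_int
      (tendsto_zero_of_hasDerivAt_of_integrableOn_Ioi (fun x hx ↦ (hderiv x hx).norm_sq)
        hderiv_int hsq)
  calc ‖u a‖ ^ 2 = ∫ x in Ioi a, -(2 * inner ℝ (u x) (u' x)) := by
        rw [integral_neg, hftc]; ring
    _ ≤ ∫ x in Ioi a, (ε * ‖u' x‖ ^ 2 + ε⁻¹ * ‖u x‖ ^ 2) :=
        integral_mono hderiv_int.neg hdom fun x ↦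
          (neg_le_abs _).trans (abs_two_mul_real_inner_le hε (u x) (u' x))
    _ = ε * (∫ x in Ioi a, ‖u' x‖ ^ 2) + ε⁻¹ * ∫ x in Ioi a, ‖u x‖ ^ 2 := by
        rw [integral_add (hsq'.const_mul ε) (hsq.const_mul ε⁻¹), integral_const_mul,
          integral_const_mul]

end TraceInequality

/-- Quadratic form lower bound for the δ-vertex with `α < 0`:
`∑ⱼ ∫|uⱼ'|² + α|u₁(0)|² ≥ -(α²/N²) ∑ⱼ ∫|uⱼ|²`. -/
theorem delta_form_lower_bound (N : ℕ) (hN : 1 ≤ N) (α : ℝ) (hα : α < 0)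
    (u u' : Fin N → ℝ → ℂ)
    (hcont : ∀ j, ContinuousOn (u j) (Ici 0))
    (hderiv : ∀ j, ∀ x ∈ Ioi (0 : ℝ), HasDerivAt (u j) (u' j x) x)
    (hu : ∀ j, MemLp (u j) 2 (volume.restrict (Ioi (0 : ℝ))))
    (hu' : ∀ j, MemLp (u' j) 2 (volume.restrict (Ioi (0 : ℝ))))
    (hvertex : ∀ i j : Fin N, u i 0 = u j 0) :
    (∑ j : Fin N, ∫ x in Ioi (0 : ℝ), ‖u' j x‖ ^ 2) + α * ‖u ⟨0, by omega⟩ 0‖ ^ 2 ≥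
      -(α ^ 2 / (N : ℝ) ^ 2) * (∑ j : Fin N, ∫ x in Ioi (0 : ℝ), ‖u j x‖ ^ 2) := by
  set c := ‖u ⟨0, by omega⟩ 0‖ ^ 2
  set S' := ∑ j : Fin N, ∫ x in Ioi (0 : ℝ), ‖u' j x‖ ^ 2
  set S := ∑ j : Fin N, ∫ x in Ioi (0 : ℝ), ‖u j x‖ ^ 2
  have hNpos : (0 : ℝ) < N := by exact_mod_cast hN
  have hε : 0 < (N : ℝ) / -α := div_pos hNpos (neg_pos.2 hα)
  have hedge (j : Fin N) :
      c ≤ N / -α * (∫ x in Ioi (0 : ℝ), ‖u' j x‖ ^ 2) + (N / -α)⁻¹ * ∫ x in Ioi 0, ‖u j x‖ ^ 2 := by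
    rw [show c = ‖u j 0‖ ^ 2 by rw [hvertex]]
    exact norm_sq_le_integral_of_memLp_two ((hcont j).continuousWithinAt self_mem_Ici)
      (hderiv j) (hu j) (hu' j) hε
  have hsum : N * c ≤ N / -α * S' + (N / -α)⁻¹ * S := by
    calc N * c = ∑ _j : Fin N, c := by simp
      _ ≤ ∑ j : Fin N, (N / -α * (∫ x in Ioi (0 : ℝ), ‖u' j x‖ ^ 2)
            + (N / -α)⁻¹ * ∫ x in Ioi 0, ‖u j x‖ ^ 2) := Finset.sum_le_sum fun j _ ↦ hedge j
      _ = N / -α * S' + (N / -α)⁻¹ * S := by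
        rw [Finset.sum_add_distrib, ← Finset.mul_sum, ← Finset.mul_sum]
  have hscaled := mul_le_mul_of_nonneg_left hsum (div_pos (neg_pos.2 hα) hNpos).le
  have hlhs : -α / N * (N * c) = -α * c := by field_simp
  have hrhs : -α / N * (N / -α * S' + (N / -α)⁻¹ * S) = S' + α ^ 2 / N ^ 2 * S := by
    have hα0 : α ≠ 0 := hα.ne
    field_simp; ring
  linarith
end

section
/- Sign of the slope: with Q = Q₁·Q₂ as above, if α < 0 and ω ∈ (−m, −m√(p−1)/2) ∪ (m√(p−1)/2, m) then (Q₁Q₂)'(ω) > 0; if α > 0 and ω ∈ (−m√(p−1)/2, 0) ∪ (0, m√(p−1)/2) then (Q₁Q₂)'(ω) < 0. -/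
open Real Set intervalIntegral

lemma aux_q {p : ℝ} (hp : 1 < p) : (-1 : ℝ) < (3 - p) / (p - 1) := by
  rw [lt_div_iff₀ (by linarith)]; linarith

lemma aux_int {p : ℝ} (hp : 1 < p) {a : ℝ} (ha : -1 < a) (ha1 : a ≤ 1) :
    IntervalIntegrable (fun t : ℝ => (1 - t ^ 2) ^ ((3 - p) / (p - 1))) MeasureTheory.volume a 1 := by
  set q := (3 - p) / (p - 1) with hqdef
  have hq : (-1 : ℝ) < q := aux_q hp
  have h1 : IntervalIntegrable (fun t : ℝ => (1 - t) ^ q) MeasureTheory.volume a 1 := by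
    have := (intervalIntegral.intervalIntegrable_rpow' (a := 0) (b := 1 - a) hq).comp_sub_left 1
    simpa using this.symm
  have h2 : ContinuousOn (fun t : ℝ => (1 + t) ^ q) (Set.uIcc a 1) := by
    rw [Set.uIcc_of_le ha1]
    intro t htm
    exact (ContinuousAt.rpow_const (by fun_prop) (Or.inl (by nlinarith [htm.1]))).continuousWithinAt
  have h3 := h1.mul_continuousOn h2
  refine h3.congr ?_
  have hsub : Set.uIoc a 1 = Set.Ioc a 1 := Set.uIoc_of_le ha1
  intro t ht
  rw [hsub] at ht
  have h1t : (0:ℝ) ≤ 1 - t := by linarith [ht.2]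
  have h2t : (0:ℝ) ≤ 1 + t := by linarith [ht.1]
  have hfac : (1:ℝ) - t ^ 2 = (1 - t) * (1 + t) := by ring
  show (1 - t) ^ q * (1 + t) ^ q = (1 - t ^ 2) ^ q
  rw [hfac, Real.mul_rpow h1t h2t]

lemma aux_ftc {p : ℝ} (hp : 1 < p) {a : ℝ} (ha : -1 < a) (ha1 : a < 1) :
    HasDerivAt (fun u => ∫ t in u..1, (1 - t ^ 2) ^ ((3 - p) / (p - 1)))
      (-(1 - a ^ 2) ^ ((3 - p) / (p - 1))) a := by
  refine intervalIntegral.integral_hasDerivAt_left (aux_int hp ha ha1.le) ?_ ?_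
  · have hcont : ContinuousOn (fun t : ℝ => (1 - t ^ 2) ^ ((3 - p) / (p - 1)))
        (Set.Ioo (-1 : ℝ) 1) := by
      intro t htm
      exact (ContinuousAt.rpow_const (by fun_prop)
        (Or.inl (by nlinarith [htm.1, htm.2]))).continuousWithinAt
    exact ⟨Set.Ioo (-1 : ℝ) 1, Ioo_mem_nhds ha ha1,
      hcont.aestronglyMeasurable measurableSet_Ioo⟩
  · exact ContinuousAt.rpow_const (by fun_prop) (Or.inl (by nlinarith))

lemma aux_pos {p : ℝ} (hp : 1 < p) {a : ℝ} (ha : -1 < a) (ha1 : a < 1) :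
    0 < ∫ t in a..1, (1 - t ^ 2) ^ ((3 - p) / (p - 1)) := by
  refine intervalIntegral.intervalIntegral_pos_of_pos_on (aux_int hp ha ha1.le) ?_ ha1
  intro t ht
  exact Real.rpow_pos_of_pos (by nlinarith [ht.1, ht.2]) _

set_option maxHeartbeats 2000000 in
/-- Sign of the slope `∂_ω Q(Φ) = (Q₁Q₂)'(ω)`: positive for `α < 0` and
`ω ∈ (-m, -m√(p-1)/2) ∪ (m√(p-1)/2, m)`; negative for `α > 0` and
`ω ∈ (-m√(p-1)/2, 0) ∪ (0, m√(p-1)/2)`. -/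
theorem slope_sign (N k : ℕ) (α p m : ℝ)
    (hN : 2 ≤ N) (hk : (k : ℝ) ≤ ((N : ℝ) - 1) / 2) (hα : α ≠ 0)
    (hp : 1 < p) (hp5 : p < 5) (hm : 0 < m)
    (t₀ : ℝ → ℝ)
    (ht₀ : ∀ w, t₀ w = α / ((2 * (k : ℝ) - N) * Real.sqrt (m ^ 2 - w ^ 2)))
    (Q₁ Q₂ : ℝ → ℝ)
    (hQ₁ : Q₁ = fun w => -2 * w * ((p + 1) / 2) ^ (2 / (p - 1)) *
      (m ^ 2 - w ^ 2) ^ ((5 - p) / (2 * (p - 1))) / (p - 1))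
    (hQ₂ : Q₂ = fun w => (k : ℝ) * (∫ t in (-t₀ w)..1, (1 - t ^ 2) ^ ((3 - p) / (p - 1))) +
      ((N : ℝ) - k) * ∫ t in (t₀ w)..1, (1 - t ^ 2) ^ ((3 - p) / (p - 1)))
    (ω : ℝ) (hω : m ^ 2 - ω ^ 2 > α ^ 2 / ((N : ℝ) - 2 * k) ^ 2) :
    (α < 0 → ω ∈ Ioo (-m) (-m * Real.sqrt (p - 1) / 2) ∪ Ioo (m * Real.sqrt (p - 1) / 2) m →
      0 < deriv (fun w => Q₁ w * Q₂ w) ω) ∧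
    (0 < α → ω ∈ Ioo (-m * Real.sqrt (p - 1) / 2) 0 ∪ Ioo 0 (m * Real.sqrt (p - 1) / 2) →
      deriv (fun w => Q₁ w * Q₂ w) ω < 0) := by
  have hp1 : (0:ℝ) < p - 1 := by linarith
  have hC : 0 < ((p + 1) / 2) ^ (2 / (p - 1)) := Real.rpow_pos_of_pos (by linarith) _
  have hNk1 : (1:ℝ) ≤ (N:ℝ) - 2 * k := by linarith
  have h2kN : (2 * (k:ℝ) - N) ≠ 0 := by linarith
  have hα2 : 0 < α ^ 2 / ((N:ℝ) - 2 * k) ^ 2 := by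
    apply div_pos (by positivity); positivity
  have hs : 0 < m ^ 2 - ω ^ 2 := hα2.trans hω
  have hrs : 0 < Real.sqrt (m ^ 2 - ω ^ 2) := Real.sqrt_pos.2 hs
  have hss : Real.sqrt (m ^ 2 - ω ^ 2) ^ 2 = m ^ 2 - ω ^ 2 := Real.sq_sqrt hs.le
  -- bounds on t₀ ω
  have ht₀sq : (t₀ ω) ^ 2 < 1 := by
    rw [ht₀ ω, div_pow, mul_pow, hss, div_lt_one (by positivity)]
    have h1 := (div_lt_iff₀ (by positivity : (0:ℝ) < ((N:ℝ) - 2*k) ^ 2)).1 hω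
    nlinarith [h1]
  have ht₀1 : -1 < t₀ ω := by nlinarith [ht₀sq]
  have ht₀2 : t₀ ω < 1 := by nlinarith [ht₀sq]
  -- derivative of t₀
  have hinner : HasDerivAt (fun w : ℝ => m ^ 2 - w ^ 2) (-(2 * ω)) ω := by
    simpa using (hasDerivAt_pow 2 ω).const_sub (m ^ 2)
  have hsqrt := hinner.sqrt (ne_of_gt hs)
  have hden := hsqrt.const_mul (2 * (k:ℝ) - N)
  have hdiv := (hasDerivAt_const ω α).div hden (mul_ne_zero h2kN (ne_of_gt hrs))
  have hT : HasDerivAt t₀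
      (α * ω / ((2 * (k:ℝ) - N) * (Real.sqrt (m ^ 2 - ω ^ 2) * (m ^ 2 - ω ^ 2)))) ω := by
    have hfun : t₀ = fun w => α / ((2 * (k : ℝ) - N) * Real.sqrt (m ^ 2 - w ^ 2)) :=
      funext ht₀
    rw [hfun]
    refine hdiv.congr_deriv ?_
    symm
    have hms : Real.sqrt (m ^ 2 - ω ^ 2) * Real.sqrt (m ^ 2 - ω ^ 2) = m ^ 2 - ω ^ 2 :=
      Real.mul_self_sqrt hs.le
    field_simp
    linear_combination (α * ω) * hms
  set T := α * ω / ((2 * (k:ℝ) - N) * (Real.sqrt (m ^ 2 - ω ^ 2) * (m ^ 2 - ω ^ 2))) with hTdef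
  -- derivative of Q₂
  have hA := HasDerivAt.comp ω
    (aux_ftc hp (by linarith : (-1:ℝ) < -t₀ ω) (by linarith : -t₀ ω < 1)) hT.neg
  have hB := HasDerivAt.comp ω (aux_ftc hp ht₀1 ht₀2) hT
  simp only [Function.comp_def] at hA hB
  have hQ₂d : HasDerivAt Q₂
      ((k:ℝ) * (-(1 - (-t₀ ω) ^ 2) ^ ((3 - p) / (p - 1)) * -T) +
        ((N:ℝ) - k) * (-(1 - t₀ ω ^ 2) ^ ((3 - p) / (p - 1)) * T)) ω := by
    rw [hQ₂]
    exact (hA.const_mul ((k:ℝ))).add (hB.const_mul (((N:ℝ) - k)))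
  -- derivative of Q₁
  have hrpow := hinner.rpow_const (p := (5 - p) / (2 * (p - 1))) (Or.inl (ne_of_gt hs))
  have hQ₁d : HasDerivAt Q₁
      ((-2 * 1 * ((p + 1) / 2) ^ (2 / (p - 1)) * (m ^ 2 - ω ^ 2) ^ ((5 - p) / (2 * (p - 1))) +
        -2 * ω * ((p + 1) / 2) ^ (2 / (p - 1)) *
          (-(2 * ω) * ((5 - p) / (2 * (p - 1))) *
            (m ^ 2 - ω ^ 2) ^ ((5 - p) / (2 * (p - 1)) - 1))) / (p - 1)) ω := by
    rw [hQ₁]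
    exact ((((hasDerivAt_id ω).const_mul (-2:ℝ)).mul_const _).mul hrpow).div_const (p - 1)
  have hDeriv := (hQ₁d.mul hQ₂d).deriv
  -- value of Q₁ at ω
  have hQ₁ω : Q₁ ω = -2 * ω * ((p + 1) / 2) ^ (2 / (p - 1)) *
      (m ^ 2 - ω ^ 2) ^ ((5 - p) / (2 * (p - 1))) / (p - 1) := by rw [hQ₁]
  -- positivity of Q₂ ω
  have hQ₂pos : 0 < Q₂ ω := by
    rw [hQ₂]
    have hI1 := aux_pos hp (by linarith : (-1:ℝ) < -t₀ ω) (by linarith : -t₀ ω < 1)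
    have hI2 := aux_pos hp ht₀1 ht₀2
    have hk0 : (0:ℝ) ≤ (k:ℝ) := Nat.cast_nonneg k
    have hN2 : (2:ℝ) ≤ (N:ℝ) := by exact_mod_cast hN
    have hNk : 0 < (N:ℝ) - k := by linarith
    exact add_pos_of_nonneg_of_pos (mul_nonneg hk0 hI1.le) (mul_pos hNk hI2)
  have hFv : 0 < (1 - t₀ ω ^ 2) ^ ((3 - p) / (p - 1)) :=
    Real.rpow_pos_of_pos (by nlinarith) _
  have hse : (m ^ 2 - ω ^ 2) ^ ((5 - p) / (2 * (p - 1))) =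
      (m ^ 2 - ω ^ 2) ^ ((5 - p) / (2 * (p - 1)) - 1) * (m ^ 2 - ω ^ 2) := by
    rw [← Real.rpow_add_one (ne_of_gt hs) ((5 - p) / (2 * (p - 1)) - 1)]
    norm_num
  -- the clean form of the derivative
  have key : deriv (fun w => Q₁ w * Q₂ w) ω =
      (-2 * ((p + 1) / 2) ^ (2 / (p - 1)) * (m ^ 2 - 4 / (p - 1) * ω ^ 2) *
          (m ^ 2 - ω ^ 2) ^ ((5 - p) / (2 * (p - 1)) - 1) / (p - 1)) * Q₂ ω +
      (-2 * α * ω ^ 2 * ((p + 1) / 2) ^ (2 / (p - 1)) *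
          (m ^ 2 - ω ^ 2) ^ ((5 - p) / (2 * (p - 1))) * (1 - t₀ ω ^ 2) ^ ((3 - p) / (p - 1))) /
        ((p - 1) * (Real.sqrt (m ^ 2 - ω ^ 2) * (m ^ 2 - ω ^ 2))) := by
    rw [show (fun w => Q₁ w * Q₂ w) = Q₁ * Q₂ from rfl, hDeriv, hQ₁ω, hTdef]
    simp only [neg_sq]
    rw [hse]
    field_simp
    ring
  have hKe : 0 < (m ^ 2 - ω ^ 2) ^ ((5 - p) / (2 * (p - 1)) - 1) := Real.rpow_pos_of_pos hs _
  have hKe2 : 0 < (m ^ 2 - ω ^ 2) ^ ((5 - p) / (2 * (p - 1))) := Real.rpow_pos_of_pos hs _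
  have hsp : Real.sqrt (p - 1) ^ 2 = p - 1 := Real.sq_sqrt hp1.le
  have hsp0 : 0 < Real.sqrt (p - 1) := Real.sqrt_pos.2 hp1
  constructor
  · intro hneg hmem
    rw [key]
    have hGω : m ^ 2 - 4 / (p - 1) * ω ^ 2 < 0 ∧ ω ≠ 0 := by
      rcases hmem with h | h
      · have h2 : m * Real.sqrt (p - 1) / 2 < -ω := by nlinarith [h.2]
        have hc : 0 < m * Real.sqrt (p - 1) / 2 := by positivity
        constructor
        · have hlt := mul_lt_mul'' h2 h2 hc.le hc.le
          have heq : m * Real.sqrt (p - 1) / 2 * (m * Real.sqrt (p - 1) / 2) =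
              m ^ 2 * (p - 1) / 4 := by linear_combination (m ^ 2 / 4) * hsp
          have h4 : m ^ 2 < 4 / (p - 1) * ω ^ 2 := by
            rw [div_mul_eq_mul_div, lt_div_iff₀ hp1]; nlinarith [hlt, heq]
          linarith
        · intro h0; rw [h0] at h2; nlinarith
      · have h2 : m * Real.sqrt (p - 1) / 2 < ω := h.1
        have hc : 0 < m * Real.sqrt (p - 1) / 2 := by positivity
        constructor
        · have hlt := mul_lt_mul'' h2 h2 hc.le hc.le
          have heq : m * Real.sqrt (p - 1) / 2 * (m * Real.sqrt (p - 1) / 2) =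
              m ^ 2 * (p - 1) / 4 := by linear_combination (m ^ 2 / 4) * hsp
          have h4 : m ^ 2 < 4 / (p - 1) * ω ^ 2 := by
            rw [div_mul_eq_mul_div, lt_div_iff₀ hp1]; nlinarith [hlt, heq]
          linarith
        · intro h0; rw [h0] at h2; nlinarith
    obtain ⟨hG, hω0⟩ := hGω
    have hw2 : 0 < ω ^ 2 := lt_of_le_of_ne (sq_nonneg ω) (Ne.symm (pow_ne_zero 2 hω0))
    apply add_pos
    · apply mul_pos _ hQ₂pos
      apply div_pos _ hp1
      nlinarith [mul_pos (mul_pos hC (neg_pos.2 hG)) hKe]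
    · apply div_pos _ (by positivity)
      nlinarith [mul_pos (mul_pos (mul_pos (mul_pos (neg_pos.2 hneg) hw2) hC) hKe2) hFv]
  · intro hpos hmem
    rw [key]
    have hGω : 0 < m ^ 2 - 4 / (p - 1) * ω ^ 2 ∧ ω ≠ 0 := by
      have heq : m * Real.sqrt (p - 1) / 2 * (m * Real.sqrt (p - 1) / 2) =
          m ^ 2 * (p - 1) / 4 := by linear_combination (m ^ 2 / 4) * hsp
      rcases hmem with h | h
      · have h2 : -ω < m * Real.sqrt (p - 1) / 2 := by nlinarith [h.1]
        have h3 : (0:ℝ) ≤ -ω := by linarith [h.2]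
        constructor
        · have hlt := mul_lt_mul'' h2 h2 h3 h3
          have h4 : 4 / (p - 1) * ω ^ 2 < m ^ 2 := by
            rw [div_mul_eq_mul_div, div_lt_iff₀ hp1]; nlinarith [hlt, heq]
          linarith
        · exact ne_of_lt h.2
      · have h2 : ω < m * Real.sqrt (p - 1) / 2 := h.2
        have h3 : (0:ℝ) ≤ ω := le_of_lt h.1
        constructor
        · have hlt := mul_lt_mul'' h2 h2 h3 h3
          have h4 : 4 / (p - 1) * ω ^ 2 < m ^ 2 := by
            rw [div_mul_eq_mul_div, div_lt_iff₀ hp1]; nlinarith [hlt, heq]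
          linarith
        · exact ne_of_gt h.1
    obtain ⟨hG, hω0⟩ := hGω
    have hw2 : 0 < ω ^ 2 := lt_of_le_of_ne (sq_nonneg ω) (Ne.symm (pow_ne_zero 2 hω0))
    apply add_neg
    · apply mul_neg_of_neg_of_pos _ hQ₂pos
      apply div_neg_of_neg_of_pos _ hp1
      nlinarith [mul_pos (mul_pos hC hG) hKe]
    · apply div_neg_of_neg_of_pos _ (by positivity)
      nlinarith [mul_pos (mul_pos (mul_pos (mul_pos hpos hw2) hC) hKe2) hFv]
end
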